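/- Define Q_ω(x,y) = (1 − exp(B^ω(x^{−1}) + B^ω(y^{−1})))/(x + y), where B^ω(w) = −Σ_{l≥1} ω_l w^{2l−1}. Then Q_ω(x,y) is a well-defined formal power series in x and y (i.e., the numerator is divisible by x+y), and it equals Σ_{n≥1} (1/n!) Σ_{l_1,…,l_n ≥ 1} (∏_{m=1}^{n} −ω_{l_m}) Σ_{i+j=2l_1−2, i,j≥0} (−1)^{i+1} Σ_{k=0}^{n−1} C(n−1,k) x^{i + Σ_{m=2}^{k+1}(2l_m−1)} y^{j + Σ_{m=k+2}^{n}(2l_m−1)}. -/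

import Mathlib

/-- The coefficient ring `ℚ[ω_1, ω_2, …]` (the variable `ω_0` plays no role). -/
abbrev OmegaRing : Type := MvPolynomial ℕ ℚ

/-- The series `B^ω(x⁻¹) + B^ω(y⁻¹) = −∑_{l≥1} ω_l x^{2l−1} − ∑_{l≥1} ω_l y^{2l−1}`
as an element of `ℚ[ω][[x,y]]`: the coefficient of `x^{2l−1}` (resp. `y^{2l−1}`) is `−ω_l`. -/
noncomputable def Bxy : MvPowerSeries (Fin 2) OmegaRing := fun d =>
  if d 1 = 0 ∧ Odd (d 0) then -(MvPolynomial.X ((d 0 + 1) / 2))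
  else if d 0 = 0 ∧ Odd (d 1) then -(MvPolynomial.X ((d 1 + 1) / 2))
  else 0

/-- `exp(B^ω(x⁻¹) + B^ω(y⁻¹))`, computed coefficientwise (the Taylor series truncates since
`Bxy` has zero constant term). -/
noncomputable def Exy : MvPowerSeries (Fin 2) OmegaRing := fun d =>
  ∑ k ∈ Finset.range (d 0 + d 1 + 1),
    (k.factorial : ℚ)⁻¹ • MvPowerSeries.coeff d (Bxy ^ k)

/-- The explicit series claimed to equal `Q_ω(x,y)`: its coefficient of `x^p y^q` is
`∑_{n≥1} (1/n!) ∑_{l_1,…,l_n ≥ 1} (∏_m −ω_{l_m}) ∑_{i+j=2l_1−2} (−1)^{i+1}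
∑_{k=0}^{n−1} C(n−1,k) [p = i + ∑_{m=2}^{k+1}(2l_m−1)] [q = j + ∑_{m=k+2}^{n}(2l_m−1)]`
(indices of tuples written 0-based; all sums truncate since large `n` or `l_m` give no
contribution to the coefficient of `x^p y^q`). -/
noncomputable def Qexp : MvPowerSeries (Fin 2) OmegaRing := fun d =>
  ∑ n ∈ Finset.range (d 0 + d 1 + 1), ((n + 1).factorial : ℚ)⁻¹ •
    ∑ l ∈ Fintype.piFinset (fun _ : Fin (n + 1) => Finset.Icc 1 (d 0 + d 1 + 2)),
      ∑ i ∈ Finset.range (2 * l 0 - 1),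
        ∑ k ∈ Finset.range (n + 1),
          (if d 0 = i + (∑ m : Fin (n + 1),
                if 1 ≤ (m : ℕ) ∧ (m : ℕ) ≤ k then 2 * l m - 1 else 0) ∧
              d 1 = (2 * l 0 - 2 - i) + (∑ m : Fin (n + 1),
                if k + 1 ≤ (m : ℕ) then 2 * l m - 1 else 0)
           then ((-1 : OmegaRing) ^ (i + 1)) * (n.choose k : OmegaRing) *
                ∏ m, (-(MvPolynomial.X (l m) : OmegaRing))
           else 0)

/-!
Write `b_l = -ω_l`, so that `B := B^ω(x⁻¹) + B^ω(y⁻¹) = ∑_l b_l (x^{2l-1} + y^{2l-1})`. The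
geometric-sum identity `x^{2l-1} + y^{2l-1} = -(x + y) ∑_{i+j=2l-2} (-1)^{i+1} x^i y^j` gives
`B = -(x + y) C` with `C = ∑_l b_l ∑_{i+j=2l-2} (-1)^{i+1} x^i y^j`, hence
`1 - exp B = -∑_{n≥1} B^n / n! = (x + y) ∑_{n≥1} C B^{n-1} / n!`.
Expanding `B^{n-1} = (B_x + B_y)^{n-1}` (with `B_x = ∑_l b_l x^{2l-1}`, `B_y` likewise) by the
binomial theorem yields exactly the coefficients of `Qexp`. Since the coefficient of `x^p y^q`
only involves the `ω_l` with `2l - 1 ≤ p + q + 1`, all identities are checked on the polynomial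
truncations `l ≤ N`.
-/

open Finset MvPowerSeries

namespace OmegaQuotient

theorem coeff_pow_congr {σ R : Type*} [CommSemiring R] {f g : MvPowerSeries σ R}
    {d : σ →₀ ℕ} (h : ∀ e ≤ d, coeff e f = coeff e g) (n : ℕ) :
    coeff d (f ^ n) = coeff d (g ^ n) := by
  classical
  rcases n with _ | n
  · rfl
  have htrunc : trunc' R d f = trunc' R d g := by
    ext e
    simp only [coeff_trunc']
    split_ifs with he
    exacts [h e he, rfl]
  have key (φ : MvPowerSeries σ R) : coeff d (φ ^ (n + 1)) =
      MvPolynomial.coeff d (trunc' R d ((trunc' R d φ : MvPowerSeries σ R) ^ (n + 1))) := by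
    rw [trunc'_trunc'_pow n.succ_pos, coeff_trunc', if_pos le_rfl]
  rw [key, key, htrunc]

noncomputable def xy (p q : ℕ) : Fin 2 →₀ ℕ := Finsupp.single 0 p + Finsupp.single 1 q

@[simp] theorem xy_apply_zero (p q : ℕ) : xy p q 0 = p := by simp [xy]

@[simp] theorem xy_apply_one (p q : ℕ) : xy p q 1 = q := by simp [xy]

theorem eq_xy_iff {d : Fin 2 →₀ ℕ} {p q : ℕ} : d = xy p q ↔ d 0 = p ∧ d 1 = q := by
  refine ⟨by rintro rfl; simp, fun ⟨h0, h1⟩ => ?_⟩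
  ext s
  fin_cases s <;> simpa

theorem xy_add (p q p' q' : ℕ) : xy p q + xy p' q' = xy (p + p') (q + q') := by
  simp [eq_xy_iff]

theorem sum_xy {ι : Type*} (s : Finset ι) (p q : ι → ℕ) :
    ∑ i ∈ s, xy (p i) (q i) = xy (∑ i ∈ s, p i) (∑ i ∈ s, q i) := by
  simp [eq_xy_iff, Finsupp.finsetSum_apply]

theorem monomial_xy {R : Type*} [CommSemiring R] (p q : ℕ) (r : R) :
    monomial (xy p q) r = C r * X 0 ^ p * X 1 ^ q := by
  rw [X_pow_eq, X_pow_eq, ← monomial_zero_eq_C_apply, monomial_mul_monomial,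
    monomial_mul_monomial, zero_add, mul_one, mul_one, xy]

section Truncation

variable {R : Type*} [CommRing R] (a : ℕ → R) (N : ℕ)

noncomputable def truncBx : MvPowerSeries (Fin 2) R :=
  ∑ l ∈ Icc 1 N, monomial (xy (2 * l - 1) 0) (a l)

noncomputable def truncBy : MvPowerSeries (Fin 2) R :=
  ∑ l ∈ Icc 1 N, monomial (xy 0 (2 * l - 1)) (a l)

noncomputable def truncB : MvPowerSeries (Fin 2) R := truncBx a N + truncBy a N

noncomputable def truncC : MvPowerSeries (Fin 2) R :=
  ∑ l ∈ Icc 1 N, ∑ i ∈ range (2 * l - 1),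
    monomial (xy i (2 * l - 2 - i)) ((-1) ^ (i + 1) * a l)

theorem X_add_X_mul_truncC : (X 0 + X 1) * truncC a N = -truncB a N := by
  rw [truncC, truncB, truncBx, truncBy, mul_sum, ← sum_add_distrib, ← sum_neg_distrib]
  refine sum_congr rfl fun l hl => ?_
  have hl : 1 ≤ l := (mem_Icc.1 hl).1
  have hgeom := geom_sum₂_mul (-X 0 : MvPowerSeries (Fin 2) R) (X 1) (2 * l - 1)
  have hodd : (-X 0 : MvPowerSeries (Fin 2) R) ^ (2 * l - 1) = -X 0 ^ (2 * l - 1) :=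
    Odd.neg_pow ⟨l - 1, by omega⟩ _
  have hsum : ∑ i ∈ range (2 * l - 1), monomial (xy i (2 * l - 2 - i)) ((-1) ^ (i + 1) * a l)
      = -C (a l) * ∑ i ∈ range (2 * l - 1), (-X 0) ^ i * X 1 ^ (2 * l - 1 - 1 - i) := by
    rw [mul_sum]
    refine sum_congr rfl fun i _ => ?_
    rw [monomial_xy, show 2 * l - 1 - 1 - i = 2 * l - 2 - i by omega]
    simp only [map_mul, map_pow, map_neg, map_one]
    ring
  rw [hsum, monomial_xy, monomial_xy]
  simp only [pow_zero, mul_one]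
  linear_combination C (a l) * hgeom + C (a l) * hodd

theorem pow_truncBx_mul_pow_truncBy {k n : ℕ} (hk : k ≤ n) :
    truncBx a N ^ k * truncBy a N ^ (n - k)
      = ∏ m : Fin n, if (m : ℕ) < k then truncBx a N else truncBy a N := by
  have hcard := card_filter_add_card_filter_not (s := univ) (fun m : Fin n => (m : ℕ) < k)
  rw [card_univ, Fintype.card_fin, Fin.card_filter_val_lt, min_eq_right hk] at hcard
  rw [prod_ite, prod_const, prod_const, Fin.card_filter_val_lt, min_eq_right hk,
    show #{m : Fin n | ¬(m : ℕ) < k} = n - k by omega]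

theorem truncB_pow (n : ℕ) :
    truncB a N ^ n = ∑ k ∈ range (n + 1),
      n.choose k • ∏ m : Fin n, if (m : ℕ) < k then truncBx a N else truncBy a N := by
  rw [truncB, add_pow]
  refine sum_congr rfl fun k hk => ?_
  rw [pow_truncBx_mul_pow_truncBy a N (Nat.lt_succ_iff.1 (mem_range.1 hk)), nsmul_eq_mul,
    mul_comm]

theorem truncC_mul_prod (n k : ℕ) :
    truncC a N * ∏ m : Fin n, (if (m : ℕ) < k then truncBx a N else truncBy a N)
      = ∑ l ∈ Fintype.piFinset (fun _ : Fin (n + 1) => Icc 1 N), ∑ i ∈ range (2 * l 0 - 1),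
          monomial
            (xy (i + ∑ m : Fin (n + 1), if 1 ≤ (m : ℕ) ∧ (m : ℕ) ≤ k then 2 * l m - 1 else 0)
              (2 * l 0 - 2 - i + ∑ m : Fin (n + 1), if k + 1 ≤ (m : ℕ) then 2 * l m - 1 else 0))
            ((-1) ^ (i + 1) * ∏ m, a (l m)) := by
  let c : ℕ → MvPowerSeries (Fin 2) R := fun l =>
    ∑ i ∈ range (2 * l - 1), monomial (xy i (2 * l - 2 - i)) ((-1) ^ (i + 1) * a l)
  let b : Fin n → ℕ → MvPowerSeries (Fin 2) R := fun m l =>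
    monomial
      (xy (if (m : ℕ) < k then 2 * l - 1 else 0) (if k ≤ (m : ℕ) then 2 * l - 1 else 0)) (a l)
  have hfactor (m : Fin n) :
      (if (m : ℕ) < k then truncBx a N else truncBy a N) = ∑ l ∈ Icc 1 N, b m l := by
    split_ifs with h
    · simp [b, h, not_le.2 h, truncBx]
    · simp [b, h, le_of_not_gt h, truncBy]
  have hcons : truncC a N * ∏ m : Fin n, (if (m : ℕ) < k then truncBx a N else truncBy a N)
      = ∏ m : Fin (n + 1), ∑ l ∈ Icc 1 N, (Fin.cons c b : Fin (n + 1) → ℕ → _) m l := by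
    simp only [Fin.prod_univ_succ, Fin.cons_zero, Fin.cons_succ, hfactor]
    rfl
  rw [hcons, prod_univ_sum]
  refine sum_congr rfl fun l _ => ?_
  simp only [Fin.prod_univ_succ, Fin.cons_zero, Fin.cons_succ, c, b, sum_mul, prod_monomial,
    monomial_mul_monomial, sum_xy, xy_add, Fin.sum_univ_succ]
  refine sum_congr rfl fun i _ => ?_
  congr 1
  · congr 2 <;> simp
  · ring

theorem coeff_truncC_mul_pow (d : Fin 2 →₀ ℕ) (n : ℕ) :
    coeff d (truncC a N * truncB a N ^ n)
      = ∑ l ∈ Fintype.piFinset (fun _ : Fin (n + 1) => Icc 1 N), ∑ i ∈ range (2 * l 0 - 1),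
        ∑ k ∈ range (n + 1),
          if d 0 = i + ∑ m : Fin (n + 1), (if 1 ≤ (m : ℕ) ∧ (m : ℕ) ≤ k then 2 * l m - 1 else 0)
            ∧ d 1 = 2 * l 0 - 2 - i
              + ∑ m : Fin (n + 1), (if k + 1 ≤ (m : ℕ) then 2 * l m - 1 else 0)
          then (-1) ^ (i + 1) * (n.choose k : R) * ∏ m, a (l m) else 0 := by
  rw [truncB_pow, mul_sum]
  simp only [mul_smul_comm, truncC_mul_prod, smul_sum, map_sum, map_nsmul, coeff_monomial,
    eq_xy_iff]
  rw [sum_comm]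
  refine sum_congr rfl fun l _ => ?_
  rw [sum_comm]
  refine sum_congr rfl fun i _ => sum_congr rfl fun k _ => ?_
  rw [smul_ite, smul_zero, nsmul_eq_mul, mul_left_comm, mul_assoc]

theorem coeff_truncBx (e : Fin 2 →₀ ℕ) (he : e 0 ≤ 2 * N) :
    coeff e (truncBx a N) = if e 1 = 0 ∧ Odd (e 0) then a ((e 0 + 1) / 2) else 0 := by
  have hcond (l : ℕ) (hl : l ∈ Icc 1 N) :
      e = xy (2 * l - 1) 0 ↔ (e 1 = 0 ∧ Odd (e 0)) ∧ (e 0 + 1) / 2 = l := by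
    rw [eq_xy_iff, Nat.odd_iff, mem_Icc] at *
    omega
  simp only [truncBx, map_sum, coeff_monomial]
  rw [sum_congr rfl fun l hl => if_congr (hcond l hl) rfl rfl]
  simp only [ite_and, sum_ite_irrel, sum_ite_eq, sum_const_zero]
  split_ifs with h1 h2 h3 <;> try rfl
  obtain ⟨r, hr⟩ := h2
  exact absurd (mem_Icc.2 ⟨by omega, by omega⟩) h3

theorem coeff_truncBy (e : Fin 2 →₀ ℕ) (he : e 1 ≤ 2 * N) :
    coeff e (truncBy a N) = if e 0 = 0 ∧ Odd (e 1) then a ((e 1 + 1) / 2) else 0 := by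
  have hcond (l : ℕ) (hl : l ∈ Icc 1 N) :
      e = xy 0 (2 * l - 1) ↔ (e 0 = 0 ∧ Odd (e 1)) ∧ (e 1 + 1) / 2 = l := by
    rw [eq_xy_iff, Nat.odd_iff, mem_Icc] at *
    omega
  simp only [truncBy, map_sum, coeff_monomial]
  rw [sum_congr rfl fun l hl => if_congr (hcond l hl) rfl rfl]
  simp only [ite_and, sum_ite_irrel, sum_ite_eq, sum_const_zero]
  split_ifs with h1 h2 h3 <;> try rfl
  obtain ⟨r, hr⟩ := h2
  exact absurd (mem_Icc.2 ⟨by omega, by omega⟩) h3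

end Truncation

theorem coeff_X_mul {σ R : Type*} [CommSemiring R] (s : σ) (d : σ →₀ ℕ)
    (f : MvPowerSeries σ R) :
    coeff d (X s * f) = if d s = 0 then 0 else coeff (d - Finsupp.single s 1) f := by
  rw [X_def, coeff_monomial_mul]
  simp only [Finsupp.single_le_iff, one_mul]
  split_ifs <;> first | rfl | omega

theorem coeff_X_add_X_mul_congr {R : Type*} [CommSemiring R] {d : Fin 2 →₀ ℕ}
    {f g : MvPowerSeries (Fin 2) R}
    (h : ∀ s, d s ≠ 0 → coeff (d - Finsupp.single s 1) f = coeff (d - Finsupp.single s 1) g) :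
    coeff d ((X 0 + X 1) * f) = coeff d ((X 0 + X 1) * g) := by
  simp only [add_mul, map_add, coeff_X_mul]
  congr 1 <;> split_ifs with hs <;> first | rfl | exact h _ hs

noncomputable def negOmega (l : ℕ) : OmegaRing := -MvPolynomial.X l

theorem coeff_truncB_negOmega {N : ℕ} {e : Fin 2 →₀ ℕ} (he : e 0 + e 1 ≤ 2 * N) :
    coeff e (truncB negOmega N) = coeff e Bxy := by
  rw [truncB, map_add, coeff_truncBx _ _ _ (by omega), coeff_truncBy _ _ _ (by omega)]
  change _ = if e 1 = 0 ∧ Odd (e 0) then _ else if e 0 = 0 ∧ Odd (e 1) then _ else 0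
  simp only [Nat.odd_iff]
  split_ifs <;> first | omega | simp [negOmega]

theorem coeff_Qexp (d : Fin 2 →₀ ℕ) :
    coeff d Qexp = ∑ n ∈ range (d 0 + d 1 + 1), ((n + 1).factorial : ℚ)⁻¹ •
      coeff d (truncC negOmega (d 0 + d 1 + 2) * truncB negOmega (d 0 + d 1 + 2) ^ n) := by
  simp only [coeff_truncC_mul_pow]
  rfl

-- Both predecessors `d - single s 1` of `d` have total degree `d 0 + d 1 - 1`, so `Qexp` is read
-- off at both of them with the same truncation level `d 0 + d 1 + 1`.
theorem coeff_X_add_X_mul_Qexp (d : Fin 2 →₀ ℕ) :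
    coeff d ((X 0 + X 1) * Qexp)
      = -∑ n ∈ range (d 0 + d 1),
          ((n + 1).factorial : ℚ)⁻¹ • coeff d (Bxy ^ (n + 1)) := by
  set D := d 0 + d 1
  have hB (n : ℕ) : coeff d (truncB negOmega (D + 1) ^ n) = coeff d (Bxy ^ n) :=
    coeff_pow_congr (fun e he => coeff_truncB_negOmega (by have := he 0; have := he 1; omega)) n
  have hQ : coeff d ((X 0 + X 1) * Qexp) = coeff d ((X 0 + X 1) * ∑ n ∈ range D,
      ((n + 1).factorial : ℚ)⁻¹ •
        (truncC negOmega (D + 1) * truncB negOmega (D + 1) ^ n)) := by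
    refine coeff_X_add_X_mul_congr fun s hs => ?_
    obtain ⟨hdeg₁, hdeg₂⟩ : (d - Finsupp.single s 1 : Fin 2 →₀ ℕ) 0
        + (d - Finsupp.single s 1 : Fin 2 →₀ ℕ) 1 + 1 = D ∧
        (d - Finsupp.single s 1 : Fin 2 →₀ ℕ) 0
        + (d - Finsupp.single s 1 : Fin 2 →₀ ℕ) 1 + 2 = D + 1 := by
      fin_cases s <;> simp at hs ⊢ <;> omega
    rw [coeff_Qexp, hdeg₁, hdeg₂, map_sum]
    exact sum_congr rfl fun n _ => (LinearMap.map_smul_of_tower _ _ _).symm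
  rw [hQ, mul_sum]
  simp only [mul_smul_comm, ← mul_assoc, X_add_X_mul_truncC, neg_mul, ← pow_succ', map_sum,
    LinearMap.map_smul_of_tower, map_neg, hB, smul_neg, sum_neg_distrib]

theorem coeff_one_sub_Exy (d : Fin 2 →₀ ℕ) :
    coeff d (1 - Exy)
      = -∑ n ∈ range (d 0 + d 1),
          ((n + 1).factorial : ℚ)⁻¹ • coeff d (Bxy ^ (n + 1)) := by
  have hE : coeff d Exy
      = ∑ k ∈ range (d 0 + d 1 + 1), (k.factorial : ℚ)⁻¹ • coeff d (Bxy ^ k) := rfl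
  rw [map_sub, hE, sum_range_succ', Nat.factorial_zero, Nat.cast_one, inv_one, one_smul,
    pow_zero]
  abel

end OmegaQuotient

open OmegaQuotient

/-- the numerator `1 − exp(B^ω(x⁻¹) + B^ω(y⁻¹))` is divisible by `x + y` in
`ℚ[ω][[x,y]]`, with quotient `Q_ω(x,y)` given by the explicit expansion `Qexp`:
`(x + y) · Qexp = 1 − exp(B^ω(x⁻¹) + B^ω(y⁻¹))`. -/
theorem stmt15 :
    (MvPowerSeries.X (0 : Fin 2) + MvPowerSeries.X (1 : Fin 2)) * Qexp = 1 - Exy :=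
  MvPowerSeries.ext fun d => by rw [coeff_X_add_X_mul_Qexp, coeff_one_sub_Exy]
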